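/- Bound on the spectral norm difference of projections: if P₁ = Φ₁(Φ₁ᵀΦ₁)⁻¹Φ₁ᵀ and P₂ = Φ₂(Φ₂ᵀΦ₂)⁻¹Φ₂ᵀ with Φ₂ = Φ₁ + E and N⁻¹Φ₁ᵀΦ₁ has eigenvalues bounded in [c, C] (0 < c ≤ C), and ‖E‖₂ ≤ η with η sufficiently small so that N⁻¹Φ₂ᵀΦ₂ remains invertible, then ‖P₂ − P₁‖₂ ≤ K·η/√N for a constant K depending only on c, C and ‖Φ₁‖₂/√N. -/

import Mathlib

/-! Rescaling `Φⱼ` to `Φⱼ / √N` leaves the projections unchanged and turns the eigenvalue hypothesis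
into `‖(Φ₁ᵀΦ₁)⁻¹‖ ≤ 1/c`, with a perturbation of size `ε = η/√N`. At that scale the Gram matrices
differ by `O(ε)`, so for small `ε` a Neumann-type argument gives `‖(Φ₂ᵀΦ₂)⁻¹‖ ≤ 2/c` and
`‖(Φ₂ᵀΦ₂)⁻¹ - (Φ₁ᵀΦ₁)⁻¹‖ = O(ε)`; telescoping the triple product `Φ (ΦᵀΦ)⁻¹ Φᵀ` then bounds the
difference of the projections by `O(ε)`. -/

open Matrix
open scoped Matrix.Norms.L2Operator

namespace Matrix

section colProj

variable {n m K : Type*} [Fintype n] [Field K]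

theorem transpose_smul_mul_smul (a : K) (Φ : Matrix n m K) :
    (a • Φ)ᵀ * (a • Φ) = (a * a) • (Φᵀ * Φ) := by
  rw [transpose_smul, Matrix.smul_mul, Matrix.mul_smul, smul_smul]

variable [Fintype m] [DecidableEq m]

theorem inv_smul_of_ne_zero (A : Matrix m m K) {k : K} (hk : k ≠ 0) : (k • A)⁻¹ = k⁻¹ • A⁻¹ := by
  by_cases hA : IsUnit A.det
  · exact inv_smul' (A := A) (Units.mk0 k hk) hA
  · have hkA : ¬IsUnit (k • A).det := by
      simpa [det_smul, hk] using hA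
    rw [nonsing_inv_apply_not_isUnit _ hA, nonsing_inv_apply_not_isUnit _ hkA, smul_zero]

noncomputable def colProj (Φ : Matrix n m K) : Matrix n n K := Φ * (Φᵀ * Φ)⁻¹ * Φᵀ

theorem colProj_smul (Φ : Matrix n m K) {a : K} (ha : a ≠ 0) : (a • Φ).colProj = Φ.colProj := by
  rw [colProj, transpose_smul_mul_smul, inv_smul_of_ne_zero _ (mul_ne_zero ha ha), transpose_smul]
  simp only [Matrix.smul_mul, Matrix.mul_smul, smul_smul]
  rw [show a * ((a * a)⁻¹ * a) = 1 by field_simp, one_smul, colProj]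

end colProj

section L2OpNorm

variable {𝕜 l m n p : Type*} [RCLike 𝕜] [Fintype l] [Fintype m] [Fintype n] [Fintype p]
  [DecidableEq m] [DecidableEq n] [DecidableEq p]

theorem l2_opNorm_mul_mul_le (X : Matrix l m 𝕜) (M : Matrix m n 𝕜) (Y : Matrix n p 𝕜) :
    ‖X * M * Y‖ ≤ ‖X‖ * ‖M‖ * ‖Y‖ :=
  (l2_opNorm_mul _ _).trans (by gcongr; exact l2_opNorm_mul _ _)

theorem l2_opNorm_mul_mul_sub_mul_mul_le (X₁ X₂ : Matrix l m 𝕜) (M₁ M₂ : Matrix m n 𝕜)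
    (Y₁ Y₂ : Matrix n p 𝕜) :
    ‖X₂ * M₂ * Y₂ - X₁ * M₁ * Y₁‖ ≤
      ‖X₂ - X₁‖ * ‖M₂‖ * ‖Y₂‖ + ‖X₁‖ * ‖M₂ - M₁‖ * ‖Y₂‖ + ‖X₁‖ * ‖M₁‖ * ‖Y₂ - Y₁‖ := by
  have hsplit : X₂ * M₂ * Y₂ - X₁ * M₁ * Y₁ =
      (X₂ - X₁) * M₂ * Y₂ + X₁ * (M₂ - M₁) * Y₂ + X₁ * M₁ * (Y₂ - Y₁) := by
    simp only [Matrix.sub_mul, Matrix.mul_sub]; abel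
  rw [hsplit]
  exact norm_add₃_le.trans (by gcongr <;> exact l2_opNorm_mul_mul_le _ _ _)

theorem l2_opNorm_inv_sub_inv_le {A B : Matrix n n 𝕜} (hA : IsUnit A) (hB : IsUnit B) :
    ‖B⁻¹ - A⁻¹‖ ≤ ‖B⁻¹‖ * ‖B - A‖ * ‖A⁻¹‖ := by
  rw [inv_sub_inv (iff_of_true hB hA), ← norm_neg (B - A), neg_sub]
  exact norm_mul₃_le

theorem l2_opNorm_inv_le_two_mul {A B : Matrix n n 𝕜} (hA : IsUnit A) (hB : IsUnit B) {a : ℝ}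
    (ha : ‖A⁻¹‖ ≤ a) (hBA : ‖B - A‖ * a ≤ 1 / 2) : ‖B⁻¹‖ ≤ 2 * a := by
  have hsub : ‖B⁻¹ - A⁻¹‖ ≤ ‖B⁻¹‖ / 2 :=
    calc ‖B⁻¹ - A⁻¹‖ ≤ ‖B⁻¹‖ * (‖B - A‖ * a) := by
          rw [← mul_assoc]; exact (l2_opNorm_inv_sub_inv_le hA hB).trans (by gcongr)
      _ ≤ ‖B⁻¹‖ / 2 := by nlinarith [norm_nonneg B⁻¹]
  linarith [norm_le_insert' B⁻¹ A⁻¹]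

end L2OpNorm

section Real

variable {n m : Type*} [Fintype n] [Fintype m] [DecidableEq n] [DecidableEq m]

theorem l2_opNorm_transpose (A : Matrix n m ℝ) : ‖Aᵀ‖ = ‖A‖ := by
  rw [← conjTranspose_eq_transpose_of_trivial, l2_opNorm_conjTranspose]

theorem l2_opNorm_transpose_mul_self_sub_le (A B : Matrix n m ℝ) :
    ‖Bᵀ * B - Aᵀ * A‖ ≤ (‖A‖ + ‖B‖) * ‖B - A‖ := by
  have hsplit : Bᵀ * B - Aᵀ * A = Aᵀ * (B - A) + (B - A)ᵀ * B := by
    simp only [transpose_sub, Matrix.sub_mul, Matrix.mul_sub]; abel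
  calc ‖Bᵀ * B - Aᵀ * A‖ ≤ ‖Aᵀ‖ * ‖B - A‖ + ‖(B - A)ᵀ‖ * ‖B‖ := by
        rw [hsplit]
        exact (norm_add_le _ _).trans (add_le_add (l2_opNorm_mul _ _) (l2_opNorm_mul _ _))
    _ = (‖A‖ + ‖B‖) * ‖B - A‖ := by rw [l2_opNorm_transpose, l2_opNorm_transpose]; ring

theorem IsHermitian.l2_opNorm_inv_le {H : Matrix n n ℝ} (hH : H.IsHermitian) {c : ℝ} (hc : 0 < c)
    (h : ∀ i, c ≤ hH.eigenvalues i) : ‖H⁻¹‖ ≤ c⁻¹ := by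
  have hspec : ∀ x ∈ spectrum ℝ H, c ≤ x := by
    rw [hH.spectrum_real_eq_range_eigenvalues]
    rintro - ⟨i, rfl⟩
    exact h i
  have hinv : cfc (fun x : ℝ ↦ (id x)⁻¹) H = H⁻¹ := by
    rw [cfc_inv id H (fun x hx ↦ (hc.trans_le (hspec x hx)).ne') (ha := hH.isSelfAdjoint),
      cfc_id ℝ H (ha := hH.isSelfAdjoint), nonsing_inv_eq_ringInverse]
  rw [← hinv]
  refine norm_cfc_le (inv_nonneg.2 hc.le) fun x hx ↦ ?_
  rw [id, norm_inv, Real.norm_of_nonneg (hc.le.trans (hspec x hx))]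
  exact inv_anti₀ hc (hspec x hx)

theorem l2_opNorm_colProj_sub_le (Ψ₁ Ψ₂ : Matrix n m ℝ) {c r ε : ℝ} (hc : 0 < c)
    (hG₁ : IsUnit (Ψ₁ᵀ * Ψ₁)) (hG₂ : IsUnit (Ψ₂ᵀ * Ψ₂)) (hG₁inv : ‖(Ψ₁ᵀ * Ψ₁)⁻¹‖ ≤ c⁻¹)
    (hΨ₁ : ‖Ψ₁‖ ≤ r) (hE : ‖Ψ₂ - Ψ₁‖ ≤ ε) (hε₁ : ε ≤ 1) (hε : (2 * r + 1) * ε ≤ c / 2) :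
    ‖Ψ₂.colProj - Ψ₁.colProj‖ ≤
      (2 * (r + 1) / c + 2 * r * (2 * r + 1) * (r + 1) / c ^ 2 + r / c) * ε := by
  have hr : 0 ≤ r := (norm_nonneg _).trans hΨ₁
  have hε₀ : 0 ≤ ε := (norm_nonneg _).trans hE
  have hΨ₂ : ‖Ψ₂‖ ≤ r + 1 := by linarith [norm_le_insert' Ψ₂ Ψ₁]
  have hΔ : ‖Ψ₂ᵀ * Ψ₂ - Ψ₁ᵀ * Ψ₁‖ ≤ (2 * r + 1) * ε :=
    (l2_opNorm_transpose_mul_self_sub_le Ψ₁ Ψ₂).trans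
      (mul_le_mul (by linarith) hE (norm_nonneg _) (by linarith))
  have hG₂inv : ‖(Ψ₂ᵀ * Ψ₂)⁻¹‖ ≤ 2 * c⁻¹ :=
    l2_opNorm_inv_le_two_mul hG₁ hG₂ hG₁inv <| by
      calc ‖Ψ₂ᵀ * Ψ₂ - Ψ₁ᵀ * Ψ₁‖ * c⁻¹ ≤ c / 2 * c⁻¹ := by gcongr; exact hΔ.trans hε
        _ = 1 / 2 := by field_simp
  have hdiff : ‖(Ψ₂ᵀ * Ψ₂)⁻¹ - (Ψ₁ᵀ * Ψ₁)⁻¹‖ ≤ 2 * c⁻¹ * ((2 * r + 1) * ε) * c⁻¹ :=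
    (l2_opNorm_inv_sub_inv_le hG₁ hG₂).trans (by gcongr)
  have hEt : ‖Ψ₂ᵀ - Ψ₁ᵀ‖ ≤ ε := by rwa [← transpose_sub, l2_opNorm_transpose]
  calc ‖Ψ₂.colProj - Ψ₁.colProj‖
      ≤ ‖Ψ₂ - Ψ₁‖ * ‖(Ψ₂ᵀ * Ψ₂)⁻¹‖ * ‖Ψ₂ᵀ‖ + ‖Ψ₁‖ * ‖(Ψ₂ᵀ * Ψ₂)⁻¹ - (Ψ₁ᵀ * Ψ₁)⁻¹‖ * ‖Ψ₂ᵀ‖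
        + ‖Ψ₁‖ * ‖(Ψ₁ᵀ * Ψ₁)⁻¹‖ * ‖Ψ₂ᵀ - Ψ₁ᵀ‖ := l2_opNorm_mul_mul_sub_mul_mul_le _ _ _ _ _ _
    _ ≤ ε * (2 * c⁻¹) * (r + 1) + r * (2 * c⁻¹ * ((2 * r + 1) * ε) * c⁻¹) * (r + 1)
        + r * c⁻¹ * ε := by
        rw [l2_opNorm_transpose]; gcongr
    _ = (2 * (r + 1) / c + 2 * r * (2 * r + 1) * (r + 1) / c ^ 2 + r / c) * ε := by
        field_simp

end Real

end Matrix

theorem projection_perturbation_bound_general (c C r : ℝ) (hc : 0 < c) (hr : 0 < r) :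
    ∃ K > 0, ∃ η₀ > 0,
      ∀ (N m : ℕ), 0 < N →
        ∀ (Φ₁ Φ₂ : Matrix (Fin N) (Fin m) ℝ)
          (hH : (((N : ℝ)⁻¹ • (Φ₁ᵀ * Φ₁))).IsHermitian),
          (∀ k, c ≤ hH.eigenvalues k ∧ hH.eigenvalues k ≤ C) →
          ‖Φ₁‖ / Real.sqrt N ≤ r →
          ∀ η : ℝ, ‖Φ₂ - Φ₁‖ ≤ η → η ≤ η₀ * Real.sqrt N →
          IsUnit (Φ₁ᵀ * Φ₁) → IsUnit (Φ₂ᵀ * Φ₂) →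
          ‖Φ₂ * (Φ₂ᵀ * Φ₂)⁻¹ * Φ₂ᵀ - Φ₁ * (Φ₁ᵀ * Φ₁)⁻¹ * Φ₁ᵀ‖ ≤ K * η / Real.sqrt N := by
  refine ⟨2 * (r + 1) / c + 2 * r * (2 * r + 1) * (r + 1) / c ^ 2 + r / c, by positivity,
    min 1 (c / (2 * (2 * r + 1))), by positivity, ?_⟩
  intro N m hN Φ₁ Φ₂ hH hev hΦ₁ η hE hη hG₁ hG₂
  set s := Real.sqrt N
  have hs : 0 < s := Real.sqrt_pos.2 (Nat.cast_pos.2 hN)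
  have hgram (Φ : Matrix (Fin N) (Fin m) ℝ) :
      (s⁻¹ • Φ)ᵀ * (s⁻¹ • Φ) = (N : ℝ)⁻¹ • (Φᵀ * Φ) := by
    rw [Matrix.transpose_smul_mul_smul, ← mul_inv, Real.mul_self_sqrt (Nat.cast_nonneg N)]
  have hunit {Φ : Matrix (Fin N) (Fin m) ℝ} (hG : IsUnit (Φᵀ * Φ)) :
      IsUnit ((s⁻¹ • Φ)ᵀ * (s⁻¹ • Φ)) := by
    rw [hgram, Algebra.smul_def]
    exact ((Ne.isUnit (by positivity)).map (algebraMap ℝ _)).mul hG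
  have hnorm (A : Matrix (Fin N) (Fin m) ℝ) : ‖s⁻¹ • A‖ = ‖A‖ / s := by
    rw [norm_smul_of_nonneg (inv_nonneg.2 hs.le), inv_mul_eq_div]
  have hε : η / s ≤ min 1 (c / (2 * (2 * r + 1))) := (div_le_iff₀ hs).2 hη
  have key := Matrix.l2_opNorm_colProj_sub_le (s⁻¹ • Φ₁) (s⁻¹ • Φ₂) hc (hunit hG₁) (hunit hG₂)
    (by rw [hgram]; exact hH.l2_opNorm_inv_le hc fun k ↦ (hev k).1)
    (by rwa [hnorm])
    (by rw [← smul_sub, hnorm]; exact div_le_div_of_nonneg_right hE hs.le)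
    (hε.trans (min_le_left _ _))
    (calc (2 * r + 1) * (η / s) ≤ (2 * r + 1) * (c / (2 * (2 * r + 1))) := by
            gcongr ?_ * ?_; exact hε.trans (min_le_right _ _)
      _ = c / 2 := by field_simp)
  rw [Matrix.colProj_smul _ (inv_ne_zero hs.ne'), Matrix.colProj_smul _ (inv_ne_zero hs.ne')]
    at key
  rwa [mul_div_assoc]

/-- Spectral-norm perturbation bound for orthogonal projections: for
constants 0 < c ≤ C and r > 0 there are K > 0 and η₀ > 0 (depending only on c, C, r)
such that whenever the eigenvalues of N⁻¹Φ₁ᵀΦ₁ lie in [c, C], ‖Φ₁‖₂/√N ≤ r,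
‖Φ₂ − Φ₁‖₂ ≤ η with η ≤ η₀√N small enough that Φ₂ᵀΦ₂ remains invertible, the
orthogonal projections Pⱼ = Φⱼ(ΦⱼᵀΦⱼ)⁻¹Φⱼᵀ satisfy ‖P₂ − P₁‖₂ ≤ K·η/√N. -/
theorem projection_perturbation_bound (c C r : ℝ) (hc : 0 < c) (hcC : c ≤ C) (hr : 0 < r) :
    ∃ K > 0, ∃ η₀ > 0,
      ∀ (N m : ℕ), 0 < N →
        ∀ (Φ₁ Φ₂ : Matrix (Fin N) (Fin m) ℝ)
          (hH : (((N : ℝ)⁻¹ • (Φ₁ᵀ * Φ₁))).IsHermitian),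
          (∀ k, c ≤ hH.eigenvalues k ∧ hH.eigenvalues k ≤ C) →
          ‖Φ₁‖ / Real.sqrt N ≤ r →
          ∀ η : ℝ, ‖Φ₂ - Φ₁‖ ≤ η → η ≤ η₀ * Real.sqrt N →
          IsUnit (Φ₁ᵀ * Φ₁) → IsUnit (Φ₂ᵀ * Φ₂) →
          ‖Φ₂ * (Φ₂ᵀ * Φ₂)⁻¹ * Φ₂ᵀ - Φ₁ * (Φ₁ᵀ * Φ₁)⁻¹ * Φ₁ᵀ‖ ≤ K * η / Real.sqrt N :=
  projection_perturbation_bound_general c C r hc hr
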